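/- arXiv:2602.04620 — 4 statements merged into one kernel-verified Lean document; each statement's English description precedes it below -/
import Mathlib

section
/- With the setup of the dual function f(λ) = λ·(δ + log Σ_o π_old(o)·exp(R(o)/λ)), for λ > 0 we have f'(λ) = δ − KL(π_λ ‖ π_old), where π_λ(o) ∝ π_old(o)·exp(R(o)/λ). Consequently, if λ* > 0 is a critical point of f, then KL(π_{λ*} ‖ π_old) = δ, i.e., the trust-region constraint is active at λ*. -/
open Real Finset

theorem stmt_6 {O : Type*} [Fintype O] [Nonempty O]
    (pOld : O → ℝ) (hpos : ∀ o, 0 < pOld o) (hsum : ∑ o, pOld o = 1)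
    (R : O → ℝ) (δ : ℝ) (hδ : 0 < δ)
    (f : ℝ → ℝ)
    (hf : ∀ lam, f lam = lam * (δ + Real.log (∑ o, pOld o * Real.exp (R o / lam))))
    (pl : ℝ → O → ℝ)
    (hpl : ∀ lam o, pl lam o =
      pOld o * Real.exp (R o / lam) / ∑ o', pOld o' * Real.exp (R o' / lam))
    (KL : ℝ → ℝ)
    (hKL : ∀ lam, KL lam = ∑ o, pl lam o * Real.log (pl lam o / pOld o)) :
    (∀ lam : ℝ, 0 < lam → HasDerivAt f (δ - KL lam) lam) ∧
    (∀ lamStar : ℝ, 0 < lamStar → deriv f lamStar = 0 → KL lamStar = δ) := by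
  have key : ∀ lam : ℝ, 0 < lam → HasDerivAt f (δ - KL lam) lam := by
    intro lam hlam
    set S : ℝ := ∑ o, pOld o * Real.exp (R o / lam) with hS
    have hSpos : 0 < S := Finset.sum_pos
      (fun o _ => mul_pos (hpos o) (Real.exp_pos _)) Finset.univ_nonempty
    -- derivative of the inner sum
    have hderiv : HasDerivAt (fun x : ℝ => ∑ o, pOld o * Real.exp (R o / x))
        (∑ o, pOld o * (Real.exp (R o / lam) * (R o * -(lam ^ 2)⁻¹))) lam := by
      apply HasDerivAt.fun_sum
      intro o _
      have h1 : HasDerivAt (fun x : ℝ => R o / x) (R o * -(lam ^ 2)⁻¹) lam := by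
        simpa [div_eq_mul_inv] using (hasDerivAt_inv hlam.ne').const_mul (R o)
      exact (h1.exp).const_mul (pOld o)
    have hflam : f = fun x : ℝ => x * (δ + Real.log (∑ o, pOld o * Real.exp (R o / x))) :=
      funext hf
    have hmain : HasDerivAt f
        (1 * (δ + Real.log S) +
          lam * ((∑ o, pOld o * (Real.exp (R o / lam) * (R o * -(lam ^ 2)⁻¹))) / S)) lam := by
      rw [hflam]
      exact (hasDerivAt_id lam).mul ((hderiv.log hSpos.ne').const_add δ)
    -- compute KL lam
    have hsumpl : (∑ o, pOld o * Real.exp (R o / lam)) = S := rfl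
    have hKLeq : KL lam =
        (∑ o, pOld o * Real.exp (R o / lam) * R o) / (lam * S) - Real.log S := by
      rw [hKL]
      have hterm : ∀ o, pl lam o * Real.log (pl lam o / pOld o) =
          pOld o * Real.exp (R o / lam) * R o / (lam * S)
            - pOld o * Real.exp (R o / lam) / S * Real.log S := by
        intro o
        rw [hpl, hsumpl]
        have h1 : pOld o * Real.exp (R o / lam) / S / pOld o = Real.exp (R o / lam) / S := by
          rw [div_right_comm, mul_div_cancel_left₀ _ (hpos o).ne']
        rw [h1, Real.log_div (Real.exp_pos _).ne' hSpos.ne', Real.log_exp]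
        field_simp
      rw [Finset.sum_congr rfl (fun o _ => hterm o), Finset.sum_sub_distrib,
        ← Finset.sum_div, ← Finset.sum_mul, ← Finset.sum_div, hsumpl,
        div_self hSpos.ne', one_mul]
    have heq : δ - KL lam =
        1 * (δ + Real.log S) +
          lam * ((∑ o, pOld o * (Real.exp (R o / lam) * (R o * -(lam ^ 2)⁻¹))) / S) := by
      rw [hKLeq]
      have hpt : ∀ o : O, pOld o * (Real.exp (R o / lam) * (R o * -(lam ^ 2)⁻¹))
          = -(pOld o * Real.exp (R o / lam) * R o / lam ^ 2) := by
        intro o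
        field_simp
      have : (∑ o, pOld o * (Real.exp (R o / lam) * (R o * -(lam ^ 2)⁻¹)))
          = -((∑ o, pOld o * Real.exp (R o / lam) * R o) / lam ^ 2) := by
        rw [Finset.sum_congr rfl (fun o _ => hpt o), Finset.sum_neg_distrib,
          ← Finset.sum_div]
      rw [this]
      field_simp
      ring
    rw [heq]
    exact hmain
  refine ⟨key, fun lamStar h hcrit => ?_⟩
  have := (key lamStar h).deriv
  rw [hcrit] at this
  linarith
end

section
/- Let π*, π_pre be probability distributions with full support on a finite set O and β > 0. Then the minimizer over probability distributions π of the functional L(π) = KL(π ‖ π*) + β·KL(π ‖ π_pre) is the geometric interpolation π_kl(o) ∝ π*(o)^{1/(β+1)} · π_pre(o)^{β/(β+1)}. -/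
open Real Finset

theorem stmt_10 {O : Type*} [Fintype O] [Nonempty O]
    (pStar pPre : O → ℝ)
    (hStarPos : ∀ o, 0 < pStar o) (hStarSum : ∑ o, pStar o = 1)
    (hPrePos : ∀ o, 0 < pPre o) (hPreSum : ∑ o, pPre o = 1)
    (β : ℝ) (hβ : 0 < β)
    (pkl : O → ℝ)
    (hpkl : ∀ o, pkl o =
      pStar o ^ (1 / (β + 1)) * pPre o ^ (β / (β + 1)) /
        ∑ o', pStar o' ^ (1 / (β + 1)) * pPre o' ^ (β / (β + 1)))
    (L : (O → ℝ) → ℝ)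
    (hL : ∀ p, L p = (∑ o, p o * Real.log (p o / pStar o))
      + β * ∑ o, p o * Real.log (p o / pPre o)) :
    ∀ p : O → ℝ, (∀ o, 0 ≤ p o) → (∑ o, p o = 1) → L pkl ≤ L p := by
  intro p hp hpsum
  have hβ1 : (0:ℝ) < β + 1 := by linarith
  have hβ1' : (β + 1 : ℝ) ≠ 0 := hβ1.ne'
  set Z : ℝ := ∑ o', pStar o' ^ (1 / (β + 1)) * pPre o' ^ (β / (β + 1)) with hZdef
  have hterm : ∀ o : O, 0 < pStar o ^ (1 / (β + 1)) * pPre o ^ (β / (β + 1)) := fun o =>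
    mul_pos (Real.rpow_pos_of_pos (hStarPos o) _) (Real.rpow_pos_of_pos (hPrePos o) _)
  have hZpos : 0 < Z := Finset.sum_pos (fun o _ => hterm o) Finset.univ_nonempty
  have hpklpos : ∀ o, 0 < pkl o := fun o => by
    rw [hpkl]; exact div_pos (hterm o) hZpos
  have hpklsum : ∑ o, pkl o = 1 := by
    simp only [hpkl]
    rw [← Finset.sum_div]
    exact div_self hZpos.ne'
  -- Key identity: L q = (β+1) * KL(q‖pkl) - (β+1) * log Z for any distribution q
  have key : ∀ q : O → ℝ, (∀ o, 0 ≤ q o) → (∑ o, q o = 1) →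
      L q = (β + 1) * (∑ o, q o * Real.log (q o / pkl o)) - (β + 1) * Real.log Z := by
    intro q hq hqsum
    have tw : ∀ o, q o * Real.log (q o / pStar o) + β * (q o * Real.log (q o / pPre o))
        = (β + 1) * (q o * Real.log (q o / pkl o)) - (β + 1) * Real.log Z * q o := by
      intro o
      rcases (hq o).eq_or_lt with h0 | h0
      · simp [← h0]
      · have e1 : Real.log (q o / pStar o) = Real.log (q o) - Real.log (pStar o) :=
          Real.log_div h0.ne' (hStarPos o).ne'
        have e2 : Real.log (q o / pPre o) = Real.log (q o) - Real.log (pPre o) :=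
          Real.log_div h0.ne' (hPrePos o).ne'
        have e3 : Real.log (q o / pkl o) = Real.log (q o) -
            ((1 / (β + 1)) * Real.log (pStar o) + (β / (β + 1)) * Real.log (pPre o)
              - Real.log Z) := by
          rw [hpkl, Real.log_div h0.ne' (div_pos (hterm o) hZpos).ne',
            Real.log_div (hterm o).ne' hZpos.ne',
            Real.log_mul (Real.rpow_pos_of_pos (hStarPos o) _).ne'
              (Real.rpow_pos_of_pos (hPrePos o) _).ne',
            Real.log_rpow (hStarPos o), Real.log_rpow (hPrePos o)]
        rw [e1, e2, e3]
        field_simp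
        ring
    rw [hL]
    calc (∑ o, q o * Real.log (q o / pStar o)) + β * ∑ o, q o * Real.log (q o / pPre o)
        = ∑ o, (q o * Real.log (q o / pStar o) + β * (q o * Real.log (q o / pPre o))) := by
          rw [Finset.sum_add_distrib, Finset.mul_sum]
      _ = ∑ o, ((β + 1) * (q o * Real.log (q o / pkl o)) - (β + 1) * Real.log Z * q o) := by
          exact Finset.sum_congr rfl fun o _ => tw o
      _ = (β + 1) * (∑ o, q o * Real.log (q o / pkl o)) - (β + 1) * Real.log Z := by
          rw [Finset.sum_sub_distrib, ← Finset.mul_sum, ← Finset.mul_sum, hqsum, mul_one]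
  -- L pkl
  have hLpkl : L pkl = -((β + 1) * Real.log Z) := by
    rw [key pkl (fun o => (hpklpos o).le) hpklsum]
    have : ∀ o : O, pkl o * Real.log (pkl o / pkl o) = 0 := fun o => by
      rw [div_self (hpklpos o).ne', Real.log_one, mul_zero]
    simp [this]
  -- Gibbs inequality: 0 ≤ ∑ p log(p/pkl)
  have gibbs : 0 ≤ ∑ o, p o * Real.log (p o / pkl o) := by
    have tw : ∀ o : O, p o - pkl o ≤ p o * Real.log (p o / pkl o) := by
      intro o
      rcases (hp o).eq_or_lt with h0 | h0
      · rw [← h0]; simp [(hpklpos o).le]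
      · have h1 : Real.log (pkl o / p o) ≤ pkl o / p o - 1 :=
          Real.log_le_sub_one_of_pos (div_pos (hpklpos o) h0)
        have h2 : Real.log (p o / pkl o) = -Real.log (pkl o / p o) := by
          rw [Real.log_div h0.ne' (hpklpos o).ne', Real.log_div (hpklpos o).ne' h0.ne']
          ring
        rw [h2]
        have := mul_le_mul_of_nonneg_left h1 (hp o)
        have h3 : p o * (pkl o / p o - 1) = pkl o - p o := by
          field_simp
        nlinarith
    calc (0:ℝ) = ∑ o, (p o - pkl o) := by
          rw [Finset.sum_sub_distrib, hpsum, hpklsum]; ring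
      _ ≤ ∑ o, p o * Real.log (p o / pkl o) := Finset.sum_le_sum fun o _ => tw o
  rw [hLpkl, key p hp hpsum]
  nlinarith [mul_le_mul_of_nonneg_left gibbs hβ1.le]
end

section
/- Let O be a finite set, π_old a full-support distribution on O, R : O → ℝ nonconstant, and δ > 0. If λ* > 0 minimizes f(λ) = λ·(δ + log Σ_o π_old(o)exp(R(o)/λ)) over λ > 0 and the minimum is attained in the interior, then the tilted distribution π_{λ*}(o) ∝ π_old(o)·exp(R(o)/λ*) achieves E_{π_{λ*}}[R] = f(λ*), i.e., the dual optimal value equals the expected reward of the tilted policy (strong duality value identity). -/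
open Real Finset

theorem stmt_15 {O : Type*} [Fintype O] [Nonempty O]
    (pOld : O → ℝ) (hpos : ∀ o, 0 < pOld o) (hsum : ∑ o, pOld o = 1)
    (R : O → ℝ) (hR : ∃ o o' : O, R o ≠ R o')
    (δ : ℝ) (hδ : 0 < δ)
    (f : ℝ → ℝ)
    (hf : ∀ lam, f lam = lam * (δ + Real.log (∑ o, pOld o * Real.exp (R o / lam))))
    (lamStar : ℝ) (hlamStar : 0 < lamStar)
    (hmin : ∀ lam : ℝ, 0 < lam → f lamStar ≤ f lam)
    (pls : O → ℝ)
    (hpls : ∀ o, pls o =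
      pOld o * Real.exp (R o / lamStar) / ∑ o', pOld o' * Real.exp (R o' / lamStar)) :
    ∑ o, pls o * R o = f lamStar := by
  set Z : ℝ → ℝ := fun l => ∑ o, pOld o * Real.exp (R o * l⁻¹) with hZdef
  have hZeq : ∀ l : ℝ, (∑ o, pOld o * Real.exp (R o / l)) = Z l := by
    intro l; simp [hZdef, div_eq_mul_inv]
  have hZpos : 0 < Z lamStar := by
    apply Finset.sum_pos
    · intro o _; exact mul_pos (hpos o) (Real.exp_pos _)
    · exact Finset.univ_nonempty
  -- derivative of Z
  have hZderiv : HasDerivAt Z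
      (∑ o, pOld o * (Real.exp (R o * lamStar⁻¹) * (R o * -(lamStar ^ 2)⁻¹))) lamStar := by
    apply HasDerivAt.fun_sum
    intro o _
    exact ((((hasDerivAt_inv hlamStar.ne').const_mul (R o)).exp).const_mul (pOld o))
  set Z' : ℝ := ∑ o, pOld o * (Real.exp (R o * lamStar⁻¹) * (R o * -(lamStar ^ 2)⁻¹)) with hZ'def
  have hfderiv : HasDerivAt f
      (1 * (δ + Real.log (Z lamStar)) + lamStar * (Z' / Z lamStar)) lamStar := by
    have h1 : HasDerivAt (fun l => δ + Real.log (Z l)) (Z' / Z lamStar) lamStar :=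
      (hZderiv.log hZpos.ne').const_add δ
    have h2 := (hasDerivAt_id lamStar).mul h1
    have hfun : f = fun l => l * (δ + Real.log (Z l)) := by
      funext l; rw [hf l, hZeq l]
    rw [hfun]
    simpa [Pi.mul_def] using h2
  have hlocmin : IsLocalMin f lamStar := by
    filter_upwards [isOpen_Ioi.mem_nhds (Set.mem_Ioi.mpr hlamStar)] with l hl
    exact hmin l hl
  have hzero : 1 * (δ + Real.log (Z lamStar)) + lamStar * (Z' / Z lamStar) = 0 :=
    hlocmin.hasDerivAt_eq_zero hfderiv
  -- Define S
  set S : ℝ := ∑ o, pOld o * Real.exp (R o * lamStar⁻¹) * R o with hSdef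
  have hZ'S : Z' = -S / lamStar ^ 2 := by
    rw [hZ'def, hSdef, neg_div, Finset.sum_div, ← Finset.sum_neg_distrib]
    apply Finset.sum_congr rfl
    intro o _
    field_simp
  have hne : lamStar ≠ 0 := hlamStar.ne'
  have hZne : Z lamStar ≠ 0 := hZpos.ne'
  have hA : lamStar * ((δ + Real.log (Z lamStar)) * Z lamStar) = S := by
    have h := hzero
    rw [hZ'S, one_mul] at h
    field_simp at h
    apply mul_left_cancel₀ hne
    linear_combination lamStar * h
  have hlhs : ∑ o, pls o * R o = S / Z lamStar := by
    rw [hSdef, Finset.sum_div]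
    apply Finset.sum_congr rfl
    intro o _
    rw [hpls o, hZeq lamStar]
    simp only [div_eq_mul_inv]
    ring
  rw [hlhs, hf lamStar, hZeq lamStar, div_eq_iff hZne]
  linear_combination -hA
end

section
/- Let π_old have full support on finite O and R : O → ℝ. For 0 < λ₁ ≤ λ₂, the tilted distributions π_λ(o) ∝ π_old(o)·exp(R(o)/λ) satisfy KL(π_{λ₁} ‖ π_old) ≥ KL(π_{λ₂} ‖ π_old), i.e., the KL divergence of the tilted policy from the old policy is nonincreasing in the temperature λ. -/
open Real Finset

lemma jensen_exp_aux {O : Type*} [Fintype O] (w x : O → ℝ)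
    (hw : ∀ o, 0 ≤ w o) (hsum : ∑ o, w o = 1) :
    ∑ o, w o * x o ≤ Real.log (∑ o, w o * Real.exp (x o)) := by
  have hj : Real.exp (∑ o, w o • x o) ≤ ∑ o, w o • Real.exp (x o) :=
    convexOn_exp.map_sum_le (fun i _ => hw i) hsum (fun i _ => trivial)
  simp only [smul_eq_mul] at hj
  have hpos : 0 < ∑ o, w o * Real.exp (x o) :=
    lt_of_lt_of_le (Real.exp_pos _) hj
  calc ∑ o, w o * x o = Real.log (Real.exp (∑ o, w o * x o)) := (Real.log_exp _).symm
    _ ≤ Real.log (∑ o, w o * Real.exp (x o)) := Real.log_le_log (Real.exp_pos _) hj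

theorem stmt_18 {O : Type*} [Fintype O] [Nonempty O]
    (pOld : O → ℝ) (hpos : ∀ o, 0 < pOld o) (hsum : ∑ o, pOld o = 1)
    (R : O → ℝ)
    (pl : ℝ → O → ℝ)
    (hpl : ∀ lam o, pl lam o =
      pOld o * Real.exp (R o / lam) / ∑ o', pOld o' * Real.exp (R o' / lam))
    (lam₁ lam₂ : ℝ) (h₁ : 0 < lam₁) (h₁₂ : lam₁ ≤ lam₂) :
    ∑ o, pl lam₂ o * Real.log (pl lam₂ o / pOld o)
      ≤ ∑ o, pl lam₁ o * Real.log (pl lam₁ o / pOld o) := by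
  have h₂ : 0 < lam₂ := lt_of_lt_of_le h₁ h₁₂
  rcases eq_or_lt_of_le h₁₂ with heq | hlt
  · rw [heq]
  set Z : ℝ → ℝ := fun lam => ∑ o', pOld o' * Real.exp (R o' / lam) with hZdef
  have hZpos : ∀ lam, 0 < Z lam := fun lam =>
    Finset.sum_pos (fun o _ => mul_pos (hpos o) (Real.exp_pos _)) Finset.univ_nonempty
  have hplpos : ∀ lam o, 0 < pl lam o := by
    intro lam o
    rw [hpl]
    exact div_pos (mul_pos (hpos o) (Real.exp_pos _)) (hZpos lam)
  have hplsum : ∀ lam, ∑ o, pl lam o = 1 := by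
    intro lam
    simp only [hpl]
    rw [← Finset.sum_div, div_self (hZpos lam).ne']
  set M : ℝ → ℝ := fun lam => ∑ o, pl lam o * R o with hMdef
  -- KL formula
  have hKL : ∀ lam : ℝ, ∑ o, pl lam o * Real.log (pl lam o / pOld o)
      = M lam / lam - Real.log (Z lam) := by
    intro lam
    have : ∀ o, pl lam o * Real.log (pl lam o / pOld o)
        = pl lam o * (R o / lam) - pl lam o * Real.log (Z lam) := by
      intro o
      have hq : pl lam o / pOld o = Real.exp (R o / lam) / Z lam := by
        have hZ' : (∑ o' : O, pOld o' * Real.exp (R o' / lam)) ≠ 0 := (hZpos lam).ne'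
        have hZl : Z lam = ∑ o' : O, pOld o' * Real.exp (R o' / lam) := rfl
        rw [hpl]; rw [hZl, div_right_comm, mul_div_cancel_left₀ _ (hpos o).ne']
      rw [hq, Real.log_div (Real.exp_pos _).ne' (hZpos lam).ne', Real.log_exp, mul_sub]
    rw [Finset.sum_congr rfl (fun o _ => this o), Finset.sum_sub_distrib,
      ← Finset.sum_mul, hplsum, one_mul]
    congr 1
    rw [hMdef]
    simp only [div_eq_mul_inv, Finset.sum_mul]
    exact Finset.sum_congr rfl (fun o _ => by ring)
  -- subgradient inequality
  have hsub : ∀ lam lam' : ℝ, 0 < lam → 0 < lam' →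
      (1 / lam' - 1 / lam) * M lam ≤ Real.log (Z lam') - Real.log (Z lam) := by
    intro lam lam' hl hl'
    have key : ∑ o, pl lam o * Real.exp ((1 / lam' - 1 / lam) * R o) = Z lam' / Z lam := by
      rw [eq_div_iff (hZpos lam).ne', Finset.sum_mul]
      apply Finset.sum_congr rfl
      intro o _
      rw [hpl]
      have : pOld o * Real.exp (R o / lam) / Z lam * Real.exp ((1 / lam' - 1 / lam) * R o)
          * Z lam = pOld o * (Real.exp (R o / lam) * Real.exp ((1 / lam' - 1 / lam) * R o)) := by
        field_simp [(hZpos lam).ne']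
      rw [this, ← Real.exp_add]
      congr 2
      field_simp
      ring
    have hj := jensen_exp_aux (pl lam) (fun o => (1 / lam' - 1 / lam) * R o)
      (fun o => (hplpos lam o).le) (hplsum lam)
    have hlhs : ∑ o, pl lam o * ((1 / lam' - 1 / lam) * R o) = (1 / lam' - 1 / lam) * M lam := by
      rw [hMdef, Finset.mul_sum]
      exact Finset.sum_congr rfl (fun o _ => by ring)
    rw [hlhs, key, Real.log_div (hZpos lam').ne' (hZpos lam).ne'] at hj
    exact hj
  have hs1 := hsub lam₁ lam₂ h₁ h₂
  have hs2 := hsub lam₂ lam₁ h₂ h₁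
  -- monotonicity of M
  have hβ : 1 / lam₂ < 1 / lam₁ := one_div_lt_one_div_of_lt h₁ hlt
  have hβ2 : 0 < 1 / lam₂ := by positivity
  have hMmono : M lam₂ ≤ M lam₁ := by nlinarith [hs1, hs2]
  rw [hKL lam₁, hKL lam₂]
  have e1 : M lam₁ / lam₁ = (1 / lam₁) * M lam₁ := by ring
  have e2 : M lam₂ / lam₂ = (1 / lam₂) * M lam₂ := by ring
  rw [e1, e2]
  nlinarith [hs1, hMmono, hβ2, hβ]
end
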